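/- With β = 2^{-1/3} and the coefficients α_{k,i} as defined, for all k ≥ 1 and i ∈ {0, k} one has α_{k,i} < 1; more precisely 1 - α_{k,i} = β^{2k}(β² - β⁴)(1 + β^{2k+7})/(1 - β^{2k+7} - β^{4k+11}) > 0, and (β² - β⁴) ≤ β^{-2k}(1 - α_{k,i}) ≤ (4/3)(β² - β⁴). -/
import Mathlib


noncomputable def β : ℝ := (2 : ℝ) ^ (-(1:ℝ)/3)

/-- The coefficients `α_{k,i}` from the paper. -/
noncomputable def alph (k i : ℕ) : ℝ :=
  if k = 0 then (1 + β ^ 4 - β⁻¹) / (1 - β ^ 7 - β ^ 11)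
  else if i = 0 ∨ i = k then
    (1 - β ^ (2 * k + 2)) * (1 + β ^ (2 * k + 7))
      / (1 - β ^ (2 * k + 7) - β ^ (4 * k + 11))
  else
    (1 - β ^ (3 * k + 6) * Real.cosh (((k : ℝ) - 2 * i) * Real.log β))
      / (1 - β ^ (2 * k + 7) - β ^ (4 * k + 11))

lemma beta_pos : 0 < β := Real.rpow_pos_of_pos (by norm_num) _

lemma beta_lt_one : β < 1 :=
  Real.rpow_lt_one_of_one_lt_of_neg (by norm_num) (by norm_num)

lemma beta_cube : β ^ 3 = 1 / 2 := by
  rw [β, ← Real.rpow_natCast ((2:ℝ) ^ (-(1:ℝ)/3)) 3, ← Real.rpow_mul (by norm_num)]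
  norm_num

lemma keyid (b s : ℝ) (hb : b ^ 3 = 1 / 2) (hD : 1 - s * b ^ 7 - s ^ 2 * b ^ 11 ≠ 0) :
    1 - (1 - s * b ^ 2) * (1 + s * b ^ 7) / (1 - s * b ^ 7 - s ^ 2 * b ^ 11)
      = s * (b ^ 2 - b ^ 4) * (1 + s * b ^ 7) / (1 - s * b ^ 7 - s ^ 2 * b ^ 11) := by
  field_simp
  linear_combination (2 * s * b ^ 4 * (1 - s * b ^ 7 - s ^ 2 * b ^ 11) - 2 * (2 * s * b ^ 4 - s ^ 2 * b ^ 11 - s ^ 3 * b ^ 15)) * hb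

/-- For `k ≥ 1` and `i ∈ {0, k}`: `α_{k,i} < 1`, with the explicit expression
`1 - α_{k,i} = β^{2k}(β² - β⁴)(1 + β^{2k+7})/(1 - β^{2k+7} - β^{4k+11})`, and
`β² - β⁴ ≤ β^{-2k}(1 - α_{k,i}) ≤ (4/3)(β² - β⁴)`. -/
theorem alph_boundary_estimate (k i : ℕ) (hk : 1 ≤ k) (hi : i = 0 ∨ i = k) :
    1 - alph k i
      = β ^ (2 * k) * (β ^ 2 - β ^ 4) * (1 + β ^ (2 * k + 7))
          / (1 - β ^ (2 * k + 7) - β ^ (4 * k + 11))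
    ∧ 0 < 1 - alph k i
    ∧ β ^ 2 - β ^ 4 ≤ (1 - alph k i) / β ^ (2 * k)
    ∧ (1 - alph k i) / β ^ (2 * k) ≤ (4 / 3) * (β ^ 2 - β ^ 4) := by
  have hb0 := beta_pos
  have hb1 := beta_lt_one
  have hb3 := beta_cube
  set t : ℝ := β ^ (2 * k) with ht
  have h1 : β ^ (2 * k + 2) = t * β ^ 2 := by rw [pow_add]
  have h2 : β ^ (2 * k + 7) = t * β ^ 7 := by rw [pow_add]
  have h3 : β ^ (4 * k + 11) = t ^ 2 * β ^ 11 := by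
    rw [show 4 * k + 11 = 2 * k + (2 * k + 11) by ring, pow_add, pow_add, ht]; ring
  have ht0 : 0 < t := pow_pos hb0 _
  have hb9 : β ^ 9 = 1 / 8 := by
    rw [show (9:ℕ) = 3 * 3 from rfl, pow_mul, hb3]; norm_num
  have hb15 : β ^ 15 = 1 / 32 := by
    rw [show (15:ℕ) = 3 * 5 from rfl, pow_mul, hb3]; norm_num
  have hx : t * β ^ 7 ≤ 1 / 8 := by
    rw [← pow_add]
    calc β ^ (2 * k + 7) ≤ β ^ 9 :=
          pow_le_pow_of_le_one hb0.le hb1.le (by omega)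
      _ = 1 / 8 := hb9
  have hy : t ^ 2 * β ^ 11 ≤ 1 / 32 := by
    have : t ^ 2 * β ^ 11 = β ^ (4 * k + 11) := by rw [h3]
    rw [this]
    calc β ^ (4 * k + 11) ≤ β ^ 15 :=
          pow_le_pow_of_le_one hb0.le hb1.le (by omega)
      _ = 1 / 32 := hb15
  have hx0 : 0 < t * β ^ 7 := by positivity
  have hy0 : 0 < t ^ 2 * β ^ 11 := by positivity
  have hD : 0 < 1 - t * β ^ 7 - t ^ 2 * β ^ 11 := by nlinarith
  have hb2 : 0 < β ^ 2 - β ^ 4 := by nlinarith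
  have halph : alph k i = (1 - t * β ^ 2) * (1 + t * β ^ 7)
      / (1 - t * β ^ 7 - t ^ 2 * β ^ 11) := by
    rw [alph, if_neg (by omega), if_pos hi, h1, h2, h3]
  have key : 1 - alph k i
      = t * (β ^ 2 - β ^ 4) * (1 + t * β ^ 7) / (1 - t * β ^ 7 - t ^ 2 * β ^ 11) := by
    rw [halph]
    exact keyid β t hb3 hD.ne'
  refine ⟨by rw [key, h2, h3], ?_, ?_, ?_⟩
  · rw [key]
    positivity
  · rw [key, ht]
    rw [div_div, le_div_iff₀ (by positivity)]
    nlinarith [mul_nonneg hb2.le (by nlinarith : (0:ℝ) ≤ 2 * (t * β ^ 7) + t ^ 2 * β ^ 11)]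
  · rw [key, ht]
    rw [div_div, div_le_iff₀ (by positivity)]
    nlinarith [mul_nonneg hb2.le (by nlinarith : (0:ℝ) ≤ 1 - 7 * (t * β ^ 7) - 4 * (t ^ 2 * β ^ 11))]
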